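/- arXiv:2202.00283 — 2 statements merged into one kernel-verified Lean document; each statement's English description precedes it below -/
import Mathlib

section
/- For α = ωΔt(1+cos(ωΔt))/(2 sin(ωΔt)) with ωΔt not a multiple of π, the exponentially fitted formula α(u(t+Δt) − u(t)) = (Δt/2)(u'(t+Δt) + u'(t)) holds exactly for every function u in the span of {1, cos(ωt), sin(ωt)}. -/
theorem ef_formula_exact_on_fitting_space
    (ω Δt : ℝ) (hω : 0 < ω) (hΔt : 0 < Δt)
    (hsin : Real.sin (ω * Δt) ≠ 0)
    (α : ℝ) (hα : α = ω * Δt * (1 + Real.cos (ω * Δt)) / (2 * Real.sin (ω * Δt)))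
    (u : ℝ → ℝ)
    (hu : u ∈ Submodule.span ℝ
      ({(fun _ => (1 : ℝ)), (fun t => Real.cos (ω * t)), (fun t => Real.sin (ω * t))} :
        Set (ℝ → ℝ))) :
    ∀ t : ℝ, α * (u (t + Δt) - u t) = Δt / 2 * (deriv u (t + Δt) + deriv u t) := by
  rw [Submodule.mem_span_insert] at hu
  obtain ⟨a, z, hz, hu⟩ := hu
  rw [Submodule.mem_span_insert] at hz
  obtain ⟨b, w, hw, hz⟩ := hz
  rw [Submodule.mem_span_singleton] at hw
  obtain ⟨c, hw⟩ := hw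
  subst hw hz
  have hu' : u = fun x : ℝ => a + b * Real.cos (ω * x) + c * Real.sin (ω * x) := by
    funext x
    rw [hu]
    simp [Pi.add_apply, mul_comm]
    ring
  subst hu'
  have hd : ∀ x : ℝ,
      deriv (fun x : ℝ => a + b * Real.cos (ω * x) + c * Real.sin (ω * x)) x
      = -(b * ω * Real.sin (ω * x)) + c * ω * Real.cos (ω * x) := by
    intro x
    have h1 : HasDerivAt (fun t : ℝ => ω * t) ω x := by
      simpa using (hasDerivAt_id x).const_mul ω
    have hcos : HasDerivAt (fun t => Real.cos (ω * t)) (-Real.sin (ω * x) * ω) x := h1.cos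
    have hsin' : HasDerivAt (fun t => Real.sin (ω * t)) (Real.cos (ω * x) * ω) x := h1.sin
    have : HasDerivAt (fun t : ℝ => a + b * Real.cos (ω * t) + c * Real.sin (ω * t))
        (-(b * ω * Real.sin (ω * x)) + c * ω * Real.cos (ω * x)) x := by
      have := ((hasDerivAt_const x a).add (hcos.const_mul b)).add (hsin'.const_mul c)
      refine this.congr_deriv ?_
      ring
    exact this.deriv
  intro t
  rw [hd, hd, hα]
  simp only []
  have h2 : Real.sin (ω * t + ω * Δt) ^ 2 + Real.cos (ω * t + ω * Δt) ^ 2 = 1 :=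
    Real.sin_sq_add_cos_sq _
  have h3 : Real.sin (ω * Δt) ^ 2 + Real.cos (ω * Δt) ^ 2 = 1 := Real.sin_sq_add_cos_sq _
  rw [show ω * (t + Δt) = ω * t + ω * Δt by ring, Real.cos_add, Real.sin_add]
  field_simp
  linear_combination (b * Real.cos (ω * t) + c * Real.sin (ω * t)) * h3
end

section
/- Let H̃ : ℝ^M → ℝ be continuously differentiable and J̃ ∈ ℝ^{M×M} skew-symmetric (J̃ᵀ = −J̃). Suppose z₀, z₁ ∈ ℝ^M satisfy α(z₁ − z₀)/Δt = J̃ ∫₀¹ ∇H̃(ξz₁ + (1−ξ)z₀) dξ for some α ≠ 0 and Δt > 0. Then H̃(z₁) = H̃(z₀). -/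
theorem efavf_global_energy_conservation
    (M : ℕ) (Htil : (Fin M → ℝ) → ℝ) (hH : ContDiff ℝ 1 Htil)
    (J : Matrix (Fin M) (Fin M) ℝ) (hJ : J.transpose = -J)
    (α Δt : ℝ) (hα : α ≠ 0) (hΔt : 0 < Δt)
    (z0 z1 : Fin M → ℝ)
    (hscheme : ∀ i : Fin M,
      α * (z1 i - z0 i) / Δt
        = J.mulVec (fun j => ∫ ξ in (0 : ℝ)..1,
            fderiv ℝ Htil (ξ • z1 + (1 - ξ) • z0) (Pi.single j 1)) i) :
    Htil z1 = Htil z0 := by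
  set γ : ℝ → (Fin M → ℝ) := fun ξ => ξ • z1 + (1 - ξ) • z0 with hγ
  set m : Fin M → ℝ := fun j => ∫ ξ in (0 : ℝ)..1,
      fderiv ℝ Htil (γ ξ) (Pi.single j 1) with hm
  -- derivative of the line
  have hγdiff : ∀ ξ : ℝ, HasDerivAt γ (z1 - z0) ξ := by
    intro ξ
    have h1 : HasDerivAt (fun ξ : ℝ => ξ • z1) ((1:ℝ) • z1) ξ :=
      (hasDerivAt_id ξ).smul_const z1
    have h2 : HasDerivAt (fun ξ : ℝ => (1 - ξ) • z0) ((-1:ℝ) • z0) ξ := by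
      have h0 : HasDerivAt (fun ξ : ℝ => 1 - ξ) (-1) ξ := by
        simpa using (hasDerivAt_id' (x := ξ)).const_sub (1:ℝ)
      exact h0.smul_const z0
    have := h1.add h2
    rw [show γ = (fun ξ : ℝ => ξ • z1) + (fun ξ : ℝ => (1 - ξ) • z0) from rfl]
    simpa [sub_eq_add_neg] using this
  have hγcont : Continuous γ := by
    have : ∀ ξ, HasDerivAt γ (z1 - z0) ξ := hγdiff
    exact continuous_iff_continuousAt.2 fun ξ => (this ξ).continuousAt
  -- the chain rule
  have hg : ∀ ξ : ℝ, HasDerivAt (fun ξ => Htil (γ ξ))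
      (fderiv ℝ Htil (γ ξ) (z1 - z0)) ξ := by
    intro ξ
    exact ((hH.differentiable one_ne_zero) (γ ξ)).hasFDerivAt.comp_hasDerivAt ξ (hγdiff ξ)
  have hfc : Continuous (fderiv ℝ Htil) := hH.continuous_fderiv one_ne_zero
  have hcont : Continuous fun ξ => fderiv ℝ Htil (γ ξ) (z1 - z0) :=
    (hfc.comp hγcont).clm_apply continuous_const
  -- FTC
  have key : Htil z1 - Htil z0 = ∫ ξ in (0:ℝ)..1, fderiv ℝ Htil (γ ξ) (z1 - z0) := by
    have := intervalIntegral.integral_eq_sub_of_hasDerivAt (f := fun ξ => Htil (γ ξ))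
      (fun ξ _ => hg ξ) (hcont.intervalIntegrable 0 1)
    rw [this]
    have hγ1 : γ 1 = z1 := by simp [hγ]
    have hγ0 : γ 0 = z0 := by simp [hγ]
    show Htil z1 - Htil z0 = Htil (γ 1) - Htil (γ 0)
    rw [hγ1, hγ0]
  -- expand the direction into basis vectors
  have expand : ∀ x : Fin M → ℝ, fderiv ℝ Htil x (z1 - z0)
      = ∑ j, (z1 j - z0 j) * fderiv ℝ Htil x (Pi.single j 1) := by
    intro x
    have hd : (z1 - z0 : Fin M → ℝ) = ∑ j, (z1 j - z0 j) • (Pi.single j 1 : Fin M → ℝ) := by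
      ext i
      simp [Finset.sum_apply, Pi.single_apply, mul_ite]
    rw [hd, map_sum]
    simp [smul_eq_mul]
  have hintg : ∀ j : Fin M, IntervalIntegrable
      (fun ξ => (z1 j - z0 j) * fderiv ℝ Htil (γ ξ) (Pi.single j 1)) MeasureTheory.volume 0 1 := by
    intro j
    exact (continuous_const.mul
      ((hfc.comp hγcont).clm_apply continuous_const)).intervalIntegrable 0 1
  have swap : (∫ ξ in (0:ℝ)..1, fderiv ℝ Htil (γ ξ) (z1 - z0))
      = ∑ j, (z1 j - z0 j) * m j := by
    calc (∫ ξ in (0:ℝ)..1, fderiv ℝ Htil (γ ξ) (z1 - z0))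
        = ∫ ξ in (0:ℝ)..1, ∑ j, (z1 j - z0 j) * fderiv ℝ Htil (γ ξ) (Pi.single j 1) := by
          congr 1; ext ξ; exact expand (γ ξ)
      _ = ∑ j, ∫ ξ in (0:ℝ)..1, (z1 j - z0 j) * fderiv ℝ Htil (γ ξ) (Pi.single j 1) :=
          intervalIntegral.integral_finset_sum (fun j _ => hintg j)
      _ = ∑ j, (z1 j - z0 j) * m j := by
          refine Finset.sum_congr rfl fun j _ => ?_
          rw [intervalIntegral.integral_const_mul]
  -- from the scheme: z1 - z0 = (Δt/α) • J.mulVec m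
  have hz : ∀ i, z1 i - z0 i = (Δt / α) * J.mulVec m i := by
    intro i
    have := hscheme i
    field_simp at this ⊢
    linarith [this]
  -- skew symmetry kills the quadratic form
  have hskew : dotProduct (J.mulVec m) m = 0 := by
    have h1 : dotProduct (J.mulVec m) m = - dotProduct (J.mulVec m) m := by
      conv_lhs => rw [dotProduct_comm, Matrix.dotProduct_mulVec,
        ← Matrix.mulVec_transpose, hJ, Matrix.neg_mulVec, neg_dotProduct]
    linarith
  have final : Htil z1 - Htil z0 = 0 := by
    rw [key, swap]
    have : ∑ j, (z1 j - z0 j) * m j = (Δt / α) * dotProduct (J.mulVec m) m := by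
      rw [dotProduct, Finset.mul_sum]
      refine Finset.sum_congr rfl fun j _ => ?_
      rw [hz j]; ring
    rw [this, hskew, mul_zero]
  linarith [final]
end
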